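/- arXiv:2001.08150 — 6 statements merged into one kernel-verified Lean document; each statement's English description precedes it below -/
import Mathlib

section
/- Let α, β be real parameters with α² + β² ≠ 1, and consider the four points A1 = (1+α, 1+β), A2 = (−1−α, 1−β), A3 = (−1+α, −1+β), A4 = (1−α, −1−β) in ℝ². Then the four bilinear functions φ1, φ2, φ3, φ4 defined by φ_i(ξ,η) = a_i ξη + b_i ξ + c_i η + d_i with the explicit coefficients a1 = (α+β−1)/(4(α²+β²−1)), b1 = (β−1)(−α+β+1)/(4(α²+β²−1)), c1 = (α−1)(α−β+1)/(4(α²+β²−1)), d1 = −(α−1)(β−1)(α+β+1)/(4(α²+β²−1)) (and the analogous formulas for φ2, φ3, φ4 given in the construction) satisfy φ_i(A_j) = δ_{ij} for all i, j ∈ {1,2,3,4}. -/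
/-- The four vertices of the quadrilateral `K` in the `(ξ,η)` coordinates. -/
def qblVert (α β : ℝ) : Fin 4 → ℝ × ℝ :=
  ![(1 + α, 1 + β), (-1 - α, 1 - β), (-1 + α, -1 + β), (1 - α, -1 - β)]

/-- The four bilinear nodal basis functions of the QBL element, with the
explicit coefficients from the paper (`D = α² + β² - 1`). -/
noncomputable def qblBasis (α β : ℝ) : Fin 4 → ℝ → ℝ → ℝ :=
  fun i ξ η =>
    let D : ℝ := α ^ 2 + β ^ 2 - 1
    match i with
    | 0 => (α + β - 1) / (4 * D) * (ξ * η) + (β - 1) * (-α + β + 1) / (4 * D) * ξ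
        + (α - 1) * (α - β + 1) / (4 * D) * η + (-(α - 1) * (β - 1) * (α + β + 1)) / (4 * D)
    | 1 => (-α + β + 1) / (4 * D) * (ξ * η) + (-(β + 1) * (α + β - 1)) / (4 * D) * ξ
        + (α - 1) * (α + β + 1) / (4 * D) * η + (α - 1) * (β + 1) * (α - β + 1) / (4 * D)
    | 2 => (-(α + β + 1)) / (4 * D) * (ξ * η) + (β + 1) * (α - β + 1) / (4 * D) * ξ
        + (α + 1) * (-α + β + 1) / (4 * D) * η + (α + 1) * (β + 1) * (α + β - 1) / (4 * D)
    | 3 => (α - β + 1) / (4 * D) * (ξ * η) + (β - 1) * (α + β + 1) / (4 * D) * ξ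
        + (-(α + 1) * (α + β - 1)) / (4 * D) * η + (α + 1) * (β - 1) * (-α + β + 1) / (4 * D)

set_option maxHeartbeats 2000000 in
/-- The bilinear functions `φ_i` satisfy `φ_i(A_j) = δ_{ij}`. -/
theorem stmt_2 (α β : ℝ) (h : α ^ 2 + β ^ 2 ≠ 1) (i j : Fin 4) :
    qblBasis α β i (qblVert α β j).1 (qblVert α β j).2 = if i = j then 1 else 0 := by
  have hD : α ^ 2 + β ^ 2 - 1 ≠ 0 := sub_ne_zero.mpr h
  fin_cases i <;> fin_cases j <;>
    simp only [qblBasis, qblVert, Fin.isValue, Matrix.cons_val_zero, Matrix.cons_val_one,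
      Matrix.head_cons, Matrix.cons_val_two, Matrix.tail_cons, Matrix.cons_val_three,
      Fin.mk_one, if_true, if_false, reduceIte] <;>
    norm_num [Fin.ext_iff] <;> field_simp <;> ring
end

section
/- Let α, β be real with α² + β² ≠ 1 and let A1 = (1+α, 1+β), A2 = (−1−α, 1−β), A3 = (−1+α, −1+β), A4 = (1−α, −1−β). Then the evaluation map from span{1, ξ, η, ξη} to ℝ⁴ sending a bilinear polynomial p to (p(A1), p(A2), p(A3), p(A4)) is a linear isomorphism (unisolvence of the QBL element). -/
open Matrix

section

variable {R n : Type*} [CommRing R]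

def bilinEvalMatrix (A : n → R × R) : Matrix n (Fin 4) R :=
  Matrix.of fun i => ![1, (A i).1, (A i).2, (A i).1 * (A i).2]

lemma bilinEvalMatrix_mulVec_apply (A : n → R × R) (c : Fin 4 → R) (i : n) :
    (bilinEvalMatrix A *ᵥ c) i =
      c 0 + c 1 * (A i).1 + c 2 * (A i).2 + c 3 * ((A i).1 * (A i).2) := by
  simp only [mulVec, dotProduct, bilinEvalMatrix, of_apply, Fin.sum_univ_four, cons_val_zero,
    cons_val_one, cons_val]
  ring

end

lemma det_bilinEvalMatrix_qblVert (α β : ℝ) :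
    (bilinEvalMatrix (qblVert α β)).det = 16 * (α ^ 2 + β ^ 2 - 1) := by
  simp [det_succ_row_zero, Fin.sum_univ_succ, Fin.succAbove, bilinEvalMatrix, qblVert]
  ring

/-- Unisolvence of the QBL element: the evaluation map sending the coefficient
vector `(a,b,c,d)` of the bilinear polynomial `a + bξ + cη + dξη` to its values
at the four vertices `A_i` is a linear isomorphism (i.e. it is bijective). -/
theorem stmt_3 (α β : ℝ) (h : α ^ 2 + β ^ 2 ≠ 1) :
    ∃ L : (Fin 4 → ℝ) →ₗ[ℝ] (Fin 4 → ℝ),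
      (∀ c : Fin 4 → ℝ, ∀ i : Fin 4,
        L c i = c 0 + c 1 * (qblVert α β i).1 + c 2 * (qblVert α β i).2
          + c 3 * ((qblVert α β i).1 * (qblVert α β i).2)) ∧
      Function.Bijective L := by
  have hdet : IsUnit (bilinEvalMatrix (qblVert α β)).det := by
    rw [det_bilinEvalMatrix_qblVert, isUnit_iff_ne_zero]
    exact mul_ne_zero (by norm_num) (sub_ne_zero.mpr h)
  have hunit := (isUnit_iff_isUnit_det _).mpr hdet
  exact ⟨(bilinEvalMatrix (qblVert α β)).mulVecLin, bilinEvalMatrix_mulVec_apply _,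
    mulVec_injective_of_isUnit hunit, mulVec_surjective_iff_isUnit.mpr hunit⟩
end

section
/- Let K be the convex quadrilateral with vertices A1 = (1+α)r + (1+β)s, A2 = −(1+α)r + (1−β)s, A3 = (−1+α)r + (−1+β)s, A4 = (1−α)r − (1+β)s, where r, s ∈ ℝ² with r × s > 0 and |α|+|β| < 1, and let ξ, η be the linear coordinate functions defined by ξ(a r + b s) = a, η(a r + b s) = b. Then ∫_K 1 dx = 4 (r × s), ∫_K ξ dx = (4β/3)(r × s), and ∫_K η dx = (4α/3)(r × s). -/
open MeasureTheory

/-- The planar cross product `r × s = r₁s₂ - r₂s₁`. -/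
def cross2 (u v : ℝ × ℝ) : ℝ := u.1 * v.2 - u.2 * v.1

/-- The convex quadrilateral with vertices
`A1 = (1+α)r + (1+β)s`, `A2 = -(1+α)r + (1-β)s`,
`A3 = (-1+α)r + (-1+β)s`, `A4 = (1-α)r - (1+β)s`. -/
def quadK (α β : ℝ) (r s : ℝ × ℝ) : Set (ℝ × ℝ) :=
  convexHull ℝ {(1 + α) • r + (1 + β) • s, (-(1 + α)) • r + (1 - β) • s,
    (-1 + α) • r + (-1 + β) • s, (1 - α) • r + (-(1 + β)) • s}

/-- The linear coordinate `ξ` defined by `ξ(a r + b s) = a`. -/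
noncomputable def xiCoord (r s : ℝ × ℝ) (x : ℝ × ℝ) : ℝ := cross2 x s / cross2 r s

/-- The linear coordinate `η` defined by `η(a r + b s) = b`. -/
noncomputable def etaCoord (r s : ℝ × ℝ) (x : ℝ × ℝ) : ℝ := cross2 r x / cross2 r s

set_option maxHeartbeats 1000000

private noncomputable def mkCLM (a b c d : ℝ) : (ℝ×ℝ) →L[ℝ] (ℝ×ℝ) :=
  LinearMap.toContinuousLinearMap
  { toFun := fun p => (a*p.1 + b*p.2, c*p.1 + d*p.2)
    map_add' := by intros x y; ext <;> dsimp <;> ring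
    map_smul' := by intros m x; ext <;> dsimp <;> ring }

private lemma mkCLM_apply (a b c d : ℝ) (p : ℝ×ℝ) :
    mkCLM a b c d p = (a*p.1 + b*p.2, c*p.1 + d*p.2) := by
  simp [mkCLM]

private lemma mkCLM_det (a b c d : ℝ) : (mkCLM a b c d).det = a*d - b*c := by
  have h : (mkCLM a b c d).det = LinearMap.det
      (({ toFun := fun p => (a*p.1 + b*p.2, c*p.1 + d*p.2)
          map_add' := by intros x y; ext <;> dsimp <;> ring
          map_smul' := by intros m x; ext <;> dsimp <;> ring } : (ℝ×ℝ) →ₗ[ℝ] (ℝ×ℝ))) := by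
    rw [ContinuousLinearMap.det]
    congr 1
  rw [h, ← LinearMap.det_toMatrix (Module.Basis.finTwoProd ℝ), Matrix.det_fin_two]
  simp [LinearMap.toMatrix_apply, Module.Basis.finTwoProd]

private def Gmap (α β : ℝ) (r s : ℝ × ℝ) : ℝ×ℝ → ℝ×ℝ :=
  fun p => (p.1*(1+α*p.2)) • r + (p.2*(1+β*p.1)) • s

private noncomputable def Gder (α β : ℝ) (r s : ℝ × ℝ) (p : ℝ×ℝ) : (ℝ×ℝ) →L[ℝ] (ℝ×ℝ) :=
  mkCLM (r.1*(1+α*p.2)+s.1*(β*p.2)) (r.1*(α*p.1)+s.1*(1+β*p.1))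
        (r.2*(1+α*p.2)+s.2*(β*p.2)) (r.2*(α*p.1)+s.2*(1+β*p.1))

private lemma Gder_det (α β : ℝ) (r s : ℝ × ℝ) (p : ℝ×ℝ) :
    (Gder α β r s p).det = (1+α*p.2+β*p.1) * cross2 r s := by
  rw [Gder, mkCLM_det, cross2]; ring

private lemma Gmap_hasFDerivAt (α β : ℝ) (r s : ℝ × ℝ) (p : ℝ×ℝ) :
    HasFDerivAt (Gmap α β r s) (Gder α β r s p) p := by
  have h1 : HasFDerivAt (fun q : ℝ×ℝ => q.1*(1+α*q.2))
      (p.1 • (α • ContinuousLinearMap.snd ℝ ℝ ℝ) + (1+α*p.2) • ContinuousLinearMap.fst ℝ ℝ ℝ) p :=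
    hasFDerivAt_fst.mul ((hasFDerivAt_snd.const_mul α).const_add 1)
  have h2 : HasFDerivAt (fun q : ℝ×ℝ => q.2*(1+β*q.1))
      (p.2 • (β • ContinuousLinearMap.fst ℝ ℝ ℝ) + (1+β*p.1) • ContinuousLinearMap.snd ℝ ℝ ℝ) p :=
    hasFDerivAt_snd.mul ((hasFDerivAt_fst.const_mul β).const_add 1)
  have hG := (h1.smul_const r).add (h2.smul_const s)
  have hEq : ((p.1 • (α • ContinuousLinearMap.snd ℝ ℝ ℝ) + (1+α*p.2) • ContinuousLinearMap.fst ℝ ℝ ℝ).smulRight r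
      + (p.2 • (β • ContinuousLinearMap.fst ℝ ℝ ℝ) + (1+β*p.1) • ContinuousLinearMap.snd ℝ ℝ ℝ).smulRight s)
      = Gder α β r s p := by
    apply ContinuousLinearMap.ext
    intro q
    rw [Gder, mkCLM_apply]
    simp only [ContinuousLinearMap.add_apply, ContinuousLinearMap.smulRight_apply,
      ContinuousLinearMap.smul_apply, ContinuousLinearMap.coe_fst', ContinuousLinearMap.coe_snd',
      smul_eq_mul]
    ext <;> simp [Prod.smul_def, smul_eq_mul] <;> ring
  exact hEq ▸ hG

private lemma xi_ab (r s : ℝ × ℝ) (hd : cross2 r s ≠ 0) (a b : ℝ) :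
    xiCoord r s (a • r + b • s) = a := by
  have h : cross2 (a • r + b • s) s = a * cross2 r s := by
    simp [cross2, Prod.smul_def, smul_eq_mul]; ring
  rw [xiCoord, h, mul_div_assoc, div_self hd, mul_one]

private lemma eta_ab (r s : ℝ × ℝ) (hd : cross2 r s ≠ 0) (a b : ℝ) :
    etaCoord r s (a • r + b • s) = b := by
  have h : cross2 r (a • r + b • s) = b * cross2 r s := by
    simp [cross2, Prod.smul_def, smul_eq_mul]; ring
  rw [etaCoord, h, mul_div_assoc, div_self hd, mul_one]

private lemma int_poly (c0 c1 c2 : ℝ) :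
    ∫ x in Set.Icc (-1:ℝ) 1, (c0 + c1*x + c2*x^2) = 2*c0 + 2/3*c2 := by
  rw [MeasureTheory.integral_Icc_eq_integral_Ioc,
    ← intervalIntegral.integral_of_le (by norm_num : (-1:ℝ) ≤ 1)]
  rw [intervalIntegral.integral_eq_sub_of_hasDerivAt
      (f := fun x => c0*x + c1/2*x^2 + c2/3*x^3)
      (fun x _ => by
        have h := ((hasDerivAt_id x).const_mul c0).add
          (((hasDerivAt_pow 2 x).const_mul (c1/2)).add ((hasDerivAt_pow 3 x).const_mul (c2/3)))
        convert h using 1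
        · funext y; simp [id]; ring
        · push_cast; ring)
      ((Continuous.intervalIntegrable (by fun_prop) _ _))]
  ring

private lemma keylemma (α β u v u' v' : ℝ)
    (h1 : u*(1+α*v) = u'*(1+α*v')) (h2 : v*(1+β*u) = v'*(1+β*u')) :
    (u*v - u'*v')*(1+β*u'+α*v') = α*β*(u*v-u'*v')^2 := by
  linear_combination (v' - β*(u*v - u'*v'))*h1 + u*h2

private lemma neg_abs_le_mul {c x : ℝ} (hx : |x| ≤ 1) : -|c| ≤ c*x := by
  have h1 : |c*x| ≤ |c| := by
    rw [abs_mul]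
    nlinarith [abs_nonneg c]
  have h2 := neg_abs_le (c*x)
  linarith

private lemma Gmap_inj (α β : ℝ) (r s : ℝ × ℝ) (hc : 0 < cross2 r s) (hconv : |α| + |β| < 1) :
    Set.InjOn (Gmap α β r s) (Set.Icc (-1:ℝ) 1 ×ˢ Set.Icc (-1:ℝ) 1) := by
  have hd : cross2 r s ≠ 0 := ne_of_gt hc
  intro p hp q hq h
  obtain ⟨⟨hp11, hp12⟩, hp21, hp22⟩ := hp
  obtain ⟨⟨hq11, hq12⟩, hq21, hq22⟩ := hq
  have h1 : p.1*(1+α*p.2) = q.1*(1+α*q.2) := by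
    have := congrArg (xiCoord r s) h
    rwa [Gmap, Gmap, xi_ab r s hd, xi_ab r s hd] at this
  have h2 : p.2*(1+β*p.1) = q.2*(1+β*q.1) := by
    have := congrArg (etaCoord r s) h
    rwa [Gmap, Gmap, eta_ab r s hd, eta_ab r s hd] at this
  have key1 := keylemma α β p.1 p.2 q.1 q.2 h1 h2
  have key2 := keylemma α β q.1 q.2 p.1 p.2 h1.symm h2.symm
  have hsum : (p.1*p.2 - q.1*q.2) * (2 + β*(p.1+q.1) + α*(p.2+q.2)) = 0 := by
    linear_combination key1 - key2
  have pos : 0 < 2 + β*(p.1+q.1) + α*(p.2+q.2) := by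
    have b1 := neg_abs_le_mul (c := β) (abs_le.mpr ⟨hp11, hp12⟩)
    have b2 := neg_abs_le_mul (c := β) (abs_le.mpr ⟨hq11, hq12⟩)
    have b3 := neg_abs_le_mul (c := α) (abs_le.mpr ⟨hp21, hp22⟩)
    have b4 := neg_abs_le_mul (c := α) (abs_le.mpr ⟨hq21, hq22⟩)
    nlinarith
  have ht : p.1*p.2 = q.1*q.2 := by
    rcases mul_eq_zero.mp hsum with h' | h'
    · linarith
    · linarith
  have e1 : p.1 = q.1 := by linear_combination h1 - α*ht
  have e2 : p.2 = q.2 := by linear_combination h2 - β*ht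
  exact Prod.ext e1 e2

private lemma quad_eq (α β : ℝ) (r s : ℝ × ℝ) (hc : 0 < cross2 r s) (hconv : |α| + |β| < 1) :
    quadK α β r s = Gmap α β r s '' (Set.Icc (-1:ℝ) 1 ×ˢ Set.Icc (-1:ℝ) 1) := by
  have c1 : (0:ℝ) ≤ 2+2*α-2*β := by
    linarith [le_abs_self α, neg_abs_le α, le_abs_self β, neg_abs_le β]
  have c2 : (0:ℝ) ≤ 2+2*α+2*β := by
    linarith [le_abs_self α, neg_abs_le α, le_abs_self β, neg_abs_le β]
  have c3 : (0:ℝ) ≤ 2-2*α+2*β := by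
    linarith [le_abs_self α, neg_abs_le α, le_abs_self β, neg_abs_le β]
  have c4 : (0:ℝ) ≤ 2-2*α-2*β := by
    linarith [le_abs_self α, neg_abs_le α, le_abs_self β, neg_abs_le β]
  set A1 : ℝ×ℝ := (1 + α) • r + (1 + β) • s with hA1
  set A2 : ℝ×ℝ := (-(1 + α)) • r + (1 - β) • s with hA2
  set A3 : ℝ×ℝ := (-1 + α) • r + (-1 + β) • s with hA3
  set A4 : ℝ×ℝ := (1 - α) • r + (-(1 + β)) • s with hA4
  have hquad : quadK α β r s = convexJoin ℝ {A1} (convexJoin ℝ {A2} (segment ℝ A3 A4)) := by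
    rw [quadK, convexHull_insert ⟨_, Set.mem_insert _ _⟩,
      convexHull_insert ⟨_, Set.mem_insert _ _⟩, convexHull_pair]
  apply Set.Subset.antisymm
  · -- hull ⊆ image
    intro p hp
    rw [hquad, mem_convexJoin] at hp
    obtain ⟨a, ha, z, hz, hseg⟩ := hp
    rw [Set.mem_singleton_iff] at ha; subst ha
    rw [mem_convexJoin] at hz
    obtain ⟨a', ha', z', hz', hseg'⟩ := hz
    rw [Set.mem_singleton_iff] at ha'; subst ha'
    rw [segment_eq_image] at hseg hseg'
    rw [segment_eq_image] at hz'
    obtain ⟨θ1, hθ1, rfl⟩ := hseg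
    obtain ⟨θ2, hθ2, rfl⟩ := hseg'
    obtain ⟨θ3, hθ3, rfl⟩ := hz'
    obtain ⟨hθ1a, hθ1b⟩ := hθ1
    obtain ⟨hθ2a, hθ2b⟩ := hθ2
    obtain ⟨hθ3a, hθ3b⟩ := hθ3
    obtain ⟨P, hP⟩ : ∃ P : ℝ, P = (1-θ1)*(1+α) + θ1*((1-θ2)*(-(1+α)) + θ2*((1-θ3)*(-1+α) + θ3*(1-α))) :=
      ⟨_, rfl⟩
    obtain ⟨Q, hQdef⟩ : ∃ Q : ℝ, Q = (1-θ1)*(1+β) + θ1*((1-θ2)*(1-β) + θ2*((1-θ3)*(-1+β) + θ3*(-(1+β)))) :=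
      ⟨_, rfl⟩
    have hp' : (1-θ1) • A1 + θ1 • ((1-θ2) • A2 + θ2 • ((1-θ3) • A3 + θ3 • A4))
        = P • r + Q • s := by
      rw [hA1, hA2, hA3, hA4, hP, hQdef]
      apply Prod.ext <;> simp [Prod.smul_def, smul_eq_mul] <;> ring
    have E12 : 0 ≤ (1+α) + β*P - (1+α)*Q := by
      have h : (1+α) + β*P - (1+α)*Q
          = θ1*θ2*(1-θ3)*(2+2*α-2*β) + (θ1*θ2*θ3)*(2+2*α+2*β) := by rw [hP, hQdef]; ring
      rw [h]
      have := mul_nonneg (mul_nonneg (mul_nonneg hθ1a hθ2a) (by linarith : (0:ℝ) ≤ 1-θ3)) c1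
      have := mul_nonneg (mul_nonneg (mul_nonneg hθ1a hθ2a) hθ3a) c2
      linarith
    have E34 : 0 ≤ β*P + (1-α)*Q + (1-α) := by
      have h : β*P + (1-α)*Q + (1-α)
          = (1-θ1)*(2-2*α+2*β) + (θ1*(1-θ2))*(2-2*α-2*β) := by rw [hP, hQdef]; ring
      rw [h]
      have := mul_nonneg (by linarith : (0:ℝ) ≤ 1-θ1) c3
      have := mul_nonneg (mul_nonneg hθ1a (by linarith : (0:ℝ) ≤ 1-θ2)) c4
      linarith
    have E14 : 0 ≤ (1+β) - (1+β)*P + α*Q := by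
      have h : (1+β) - (1+β)*P + α*Q
          = (θ1*(1-θ2))*(2+2*α+2*β) + (θ1*θ2*(1-θ3))*(2-2*α+2*β) := by rw [hP, hQdef]; ring
      rw [h]
      have := mul_nonneg (mul_nonneg hθ1a (by linarith : (0:ℝ) ≤ 1-θ2)) c2
      have := mul_nonneg (mul_nonneg (mul_nonneg hθ1a hθ2a) (by linarith : (0:ℝ) ≤ 1-θ3)) c3
      linarith
    have E23 : 0 ≤ (1-β)*P + α*Q + (1-β) := by
      have h : (1-β)*P + α*Q + (1-β)
          = (1-θ1)*(2+2*α-2*β) + (θ1*θ2*θ3)*(2-2*α-2*β) := by rw [hP, hQdef]; ring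
      rw [h]
      have := mul_nonneg (by linarith : (0:ℝ) ≤ 1-θ1) c1
      have := mul_nonneg (mul_nonneg (mul_nonneg hθ1a hθ2a) hθ3a) c4
      linarith
    have hIVT := intermediate_value_Icc (by norm_num : (-1:ℝ) ≤ 1)
      (Continuous.continuousOn
        (show Continuous (fun v : ℝ => v*(1+α*v+β*P) - Q*(1+α*v)) by fun_prop))
    have h0 : (0:ℝ) ∈ Set.Icc ((-1)*(1+α*(-1)+β*P) - Q*(1+α*(-1))) (1*(1+α*1+β*P) - Q*(1+α*1)) := by
      constructor
      · nlinarith [E34]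
      · nlinarith [E12]
    obtain ⟨v, hv, hfv⟩ := hIVT h0
    obtain ⟨hva, hvb⟩ := hv
    have hav := neg_abs_le_mul (c := α) (abs_le.mpr ⟨hva, hvb⟩)
    have pos1 : 0 < 1+α*v := by linarith [le_abs_self β, neg_abs_le β, abs_nonneg β]
    have pos2 : 0 < 1+β+α*v := by linarith [le_abs_self β, neg_abs_le β]
    have pos3 : 0 < 1-β+α*v := by linarith [le_abs_self β, neg_abs_le β]
    obtain ⟨u, hu⟩ : ∃ u : ℝ, u = P/(1+α*v) := ⟨_, rfl⟩
    have hu' : u*(1+α*v) = P := by rw [hu]; exact div_mul_cancel₀ _ (ne_of_gt pos1)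
    have hfv' : v*(1+α*v+β*P) - Q*(1+α*v) = 0 := hfv
    have hQv : (1+α*v)*(v*(1+β*u) - Q) = 0 := by linear_combination hfv' + β*v*hu'
    have hQ : v*(1+β*u) = Q := by
      rcases mul_eq_zero.mp hQv with h' | h'
      · exact absurd h' (ne_of_gt pos1)
      · linarith
    have h14 : 0 ≤ (1+β+α*v)*(1-u) := by
      have heq14 : (1+β) - (1+β)*P + α*Q = (1+β+α*v)*(1-u) := by
        linear_combination (1+β)*hu' - α*hQ
      rw [← heq14]; exact E14
    have h23 : 0 ≤ (1-β+α*v)*(1+u) := by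
      have heq23 : (1-β)*P + α*Q + (1-β) = (1-β+α*v)*(1+u) := by
        linear_combination (-(1-β))*hu' - α*hQ
      rw [← heq23]; exact E23
    have hule : u ≤ 1 := by
      have h1u : (0:ℝ) ≤ 1 - u := nonneg_of_mul_nonneg_right h14 pos2
      linarith
    have huge : -1 ≤ u := by
      have h1u : (0:ℝ) ≤ 1 + u := nonneg_of_mul_nonneg_right h23 pos3
      linarith
    refine ⟨(u, v), ⟨⟨huge, hule⟩, hva, hvb⟩, ?_⟩
    show (u*(1+α*v)) • r + (v*(1+β*u)) • s = _
    rw [hu', hQ]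
    exact hp'.symm
  · -- image ⊆ hull
    rintro x ⟨p, hp, rfl⟩
    obtain ⟨⟨hp11, hp12⟩, hp21, hp22⟩ := hp
    have h1 : (0:ℝ) ≤ (1+p.1)*(1+p.2)/4 :=
      div_nonneg (mul_nonneg (by linarith) (by linarith)) (by norm_num)
    have h2 : (0:ℝ) ≤ (1-p.1)*(1+p.2)/4 :=
      div_nonneg (mul_nonneg (by linarith) (by linarith)) (by norm_num)
    have h3 : (0:ℝ) ≤ (1-p.1)*(1-p.2)/4 :=
      div_nonneg (mul_nonneg (by linarith) (by linarith)) (by norm_num)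
    have h4 : (0:ℝ) ≤ (1+p.1)*(1-p.2)/4 :=
      div_nonneg (mul_nonneg (by linarith) (by linarith)) (by norm_num)
    obtain ⟨w, hw⟩ : ∃ w : Fin 4 → ℝ,
        w = ![(1+p.1)*(1+p.2)/4, (1-p.1)*(1+p.2)/4, (1-p.1)*(1-p.2)/4, (1+p.1)*(1-p.2)/4] :=
      ⟨_, rfl⟩
    obtain ⟨z, hz⟩ : ∃ z : Fin 4 → ℝ×ℝ, z = ![A1, A2, A3, A4] := ⟨_, rfl⟩
    have hwnn : ∀ i ∈ (Finset.univ : Finset (Fin 4)), 0 ≤ w i := by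
      intro i _
      fin_cases i <;> rw [hw] <;>
        simp only [Matrix.cons_val_zero, Matrix.cons_val_one, Matrix.head_cons,
          Matrix.cons_val_two, Matrix.tail_cons, Matrix.cons_val_three]
      · exact h1
      · exact h2
      · exact h3
      · exact h4
    have hsum1 : ∑ i, w i = 1 := by
      rw [hw, Fin.sum_univ_four]
      simp only [Matrix.cons_val_zero, Matrix.cons_val_one, Matrix.head_cons,
        Matrix.cons_val_two, Matrix.tail_cons, Matrix.cons_val_three]
      ring
    have hzmem : ∀ i ∈ (Finset.univ : Finset (Fin 4)),
        z i ∈ ({A1, A2, A3, A4} : Set (ℝ×ℝ)) := by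
      intro i _
      fin_cases i <;> rw [hz]
      · exact Set.mem_insert _ _
      · exact Set.mem_insert_of_mem _ (Set.mem_insert _ _)
      · exact Set.mem_insert_of_mem _ (Set.mem_insert_of_mem _ (Set.mem_insert _ _))
      · exact Set.mem_insert_of_mem _ (Set.mem_insert_of_mem _ (Set.mem_insert_of_mem _ rfl))
    have hmem := Finset.centerMass_mem_convexHull (Finset.univ : Finset (Fin 4))
      hwnn (by rw [hsum1]; norm_num) hzmem
    have hGm : Gmap α β r s p = Finset.univ.centerMass w z := by
      rw [Finset.centerMass_eq_of_sum_1 _ z hsum1, hw, hz, Fin.sum_univ_four]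
      simp only [Matrix.cons_val_zero, Matrix.cons_val_one, Matrix.head_cons,
        Matrix.cons_val_two, Matrix.tail_cons, Matrix.cons_val_three]
      rw [hA1, hA2, hA3, hA4]
      show (p.1*(1+α*p.2)) • r + (p.2*(1+β*p.1)) • s = _
      apply Prod.ext <;> simp [Prod.smul_def, smul_eq_mul] <;> ring
    rw [hGm]
    have : ({A1, A2, A3, A4} : Set (ℝ×ℝ)) = {(1 + α) • r + (1 + β) • s, (-(1 + α)) • r + (1 - β) • s,
        (-1 + α) • r + (-1 + β) • s, (1 - α) • r + (-(1 + β)) • s} := by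
      rw [hA1, hA2, hA3, hA4]
    rw [quadK, ← this]
    exact hmem

private lemma fubini_sq (F : ℝ×ℝ → ℝ) (hF : Continuous F) :
    ∫ p in (Set.Icc (-1:ℝ) 1 ×ˢ Set.Icc (-1:ℝ) 1), F p
      = ∫ u in Set.Icc (-1:ℝ) 1, ∫ v in Set.Icc (-1:ℝ) 1, F (u,v) := by
  have hint : IntegrableOn F (Set.Icc (-1:ℝ) 1 ×ˢ Set.Icc (-1:ℝ) 1) volume :=
    (hF.continuousOn).integrableOn_compact (isCompact_Icc.prod isCompact_Icc)
  rw [Measure.volume_eq_prod] at hint ⊢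
  exact MeasureTheory.setIntegral_prod F hint

/-- `∫_K 1 = 4(r×s)`, `∫_K ξ = (4β/3)(r×s)`, `∫_K η = (4α/3)(r×s)`. -/
theorem stmt_5 (α β : ℝ) (r s : ℝ × ℝ) (hc : 0 < cross2 r s) (hconv : |α| + |β| < 1) :
    (∫ _x in quadK α β r s, (1 : ℝ)) = 4 * cross2 r s ∧
    (∫ x in quadK α β r s, xiCoord r s x) = 4 * β / 3 * cross2 r s ∧
    (∫ x in quadK α β r s, etaCoord r s x) = 4 * α / 3 * cross2 r s := by
  have hd : cross2 r s ≠ 0 := ne_of_gt hc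
  have hSqMeas : MeasurableSet (Set.Icc (-1:ℝ) 1 ×ˢ Set.Icc (-1:ℝ) 1) :=
    measurableSet_Icc.prod measurableSet_Icc
  have hder : ∀ p ∈ (Set.Icc (-1:ℝ) 1 ×ˢ Set.Icc (-1:ℝ) 1),
      HasFDerivWithinAt (Gmap α β r s) (Gder α β r s p) (Set.Icc (-1:ℝ) 1 ×ˢ Set.Icc (-1:ℝ) 1) p :=
    fun p _ => (Gmap_hasFDerivAt α β r s p).hasFDerivWithinAt
  have hinj := Gmap_inj α β r s hc hconv
  have hquad := quad_eq α β r s hc hconv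
  have habs : ∀ p ∈ (Set.Icc (-1:ℝ) 1 ×ˢ Set.Icc (-1:ℝ) 1),
      |(Gder α β r s p).det| = (1+α*p.2+β*p.1) * cross2 r s := by
    intro p hp
    obtain ⟨⟨h11, h12⟩, h21, h22⟩ := hp
    have b1 := neg_abs_le_mul (c := α) (abs_le.mpr ⟨h21, h22⟩)
    have b2 := neg_abs_le_mul (c := β) (abs_le.mpr ⟨h11, h12⟩)
    have pos : 0 < 1+α*p.2+β*p.1 := by linarith
    rw [Gder_det]
    exact abs_of_pos (mul_pos pos hc)
  have hCOV : ∀ g : ℝ×ℝ → ℝ, (∫ x in quadK α β r s, g x)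
      = ∫ p in (Set.Icc (-1:ℝ) 1 ×ˢ Set.Icc (-1:ℝ) 1),
          |(Gder α β r s p).det| • g (Gmap α β r s p) := by
    intro g
    rw [hquad]
    exact integral_image_eq_integral_abs_det_fderiv_smul volume hSqMeas hder hinj g
  refine ⟨?_, ?_, ?_⟩
  · calc (∫ _x in quadK α β r s, (1 : ℝ))
        = ∫ p in (Set.Icc (-1:ℝ) 1 ×ˢ Set.Icc (-1:ℝ) 1),
            |(Gder α β r s p).det| • (1:ℝ) := hCOV (fun _ => (1:ℝ))
      _ = ∫ p in (Set.Icc (-1:ℝ) 1 ×ˢ Set.Icc (-1:ℝ) 1),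
            (1+α*p.2+β*p.1) * cross2 r s := by
          refine MeasureTheory.setIntegral_congr_fun hSqMeas fun p hp => ?_
          rw [habs p hp, smul_eq_mul, mul_one]
      _ = ∫ u in Set.Icc (-1:ℝ) 1, ∫ v in Set.Icc (-1:ℝ) 1,
            (1+α*v+β*u) * cross2 r s := fubini_sq _ (by fun_prop)
      _ = ∫ u in Set.Icc (-1:ℝ) 1, ((2*cross2 r s) + (2*β*cross2 r s)*u + 0*u^2) := by
          refine MeasureTheory.setIntegral_congr_fun measurableSet_Icc fun u _ => ?_
          rw [show (fun v : ℝ => (1+α*v+β*u) * cross2 r s)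
              = (fun v : ℝ => ((1+β*u)*cross2 r s) + (α*cross2 r s)*v + 0*v^2) from by
                funext v; ring,
            int_poly]
          ring
      _ = 2*(2*cross2 r s) + 2/3*0 := int_poly _ _ _
      _ = 4 * cross2 r s := by ring
  · calc (∫ x in quadK α β r s, xiCoord r s x)
        = ∫ p in (Set.Icc (-1:ℝ) 1 ×ˢ Set.Icc (-1:ℝ) 1),
            |(Gder α β r s p).det| • xiCoord r s (Gmap α β r s p) := hCOV (xiCoord r s)
      _ = ∫ p in (Set.Icc (-1:ℝ) 1 ×ˢ Set.Icc (-1:ℝ) 1),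
            ((1+α*p.2+β*p.1) * cross2 r s) * (p.1*(1+α*p.2)) := by
          refine MeasureTheory.setIntegral_congr_fun hSqMeas fun p hp => ?_
          rw [habs p hp, smul_eq_mul,
            show Gmap α β r s p = (p.1*(1+α*p.2)) • r + (p.2*(1+β*p.1)) • s from rfl,
            xi_ab r s hd]
      _ = ∫ u in Set.Icc (-1:ℝ) 1, ∫ v in Set.Icc (-1:ℝ) 1,
            ((1+α*v+β*u) * cross2 r s) * (u*(1+α*v)) := fubini_sq _ (by fun_prop)
      _ = ∫ u in Set.Icc (-1:ℝ) 1,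
            ((0:ℝ) + (2*cross2 r s + 2/3*cross2 r s*α^2)*u + (2*cross2 r s*β)*u^2) := by
          refine MeasureTheory.setIntegral_congr_fun measurableSet_Icc fun u _ => ?_
          rw [show (fun v : ℝ => ((1+α*v+β*u) * cross2 r s) * (u*(1+α*v)))
              = (fun v : ℝ => (cross2 r s*u*(1+β*u)) + (cross2 r s*u*α*(2+β*u))*v
                  + (cross2 r s*u*α^2)*v^2) from by
                funext v; ring,
            int_poly]
          ring
      _ = 2*0 + 2/3*(2*cross2 r s*β) := int_poly _ _ _
      _ = 4 * β / 3 * cross2 r s := by ring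
  · calc (∫ x in quadK α β r s, etaCoord r s x)
        = ∫ p in (Set.Icc (-1:ℝ) 1 ×ˢ Set.Icc (-1:ℝ) 1),
            |(Gder α β r s p).det| • etaCoord r s (Gmap α β r s p) := hCOV (etaCoord r s)
      _ = ∫ p in (Set.Icc (-1:ℝ) 1 ×ˢ Set.Icc (-1:ℝ) 1),
            ((1+α*p.2+β*p.1) * cross2 r s) * (p.2*(1+β*p.1)) := by
          refine MeasureTheory.setIntegral_congr_fun hSqMeas fun p hp => ?_
          rw [habs p hp, smul_eq_mul,
            show Gmap α β r s p = (p.1*(1+α*p.2)) • r + (p.2*(1+β*p.1)) • s from rfl,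
            eta_ab r s hd]
      _ = ∫ u in Set.Icc (-1:ℝ) 1, ∫ v in Set.Icc (-1:ℝ) 1,
            ((1+α*v+β*u) * cross2 r s) * (v*(1+β*u)) := fubini_sq _ (by fun_prop)
      _ = ∫ u in Set.Icc (-1:ℝ) 1,
            ((2/3*cross2 r s*α) + (2/3*cross2 r s*α*β)*u + 0*u^2) := by
          refine MeasureTheory.setIntegral_congr_fun measurableSet_Icc fun u _ => ?_
          rw [show (fun v : ℝ => ((1+α*v+β*u) * cross2 r s) * (v*(1+β*u)))
              = (fun v : ℝ => (0:ℝ) + (cross2 r s*(1+β*u)^2)*v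
                  + (cross2 r s*(1+β*u)*α)*v^2) from by
                funext v; ring,
            int_poly]
          ring
      _ = 2*(2/3*cross2 r s*α) + 2/3*0 := int_poly _ _ _
      _ = 4 * α / 3 * cross2 r s := by ring
end

section
/- With K, ξ, η as in the coordinate setup (vertices (1+α,1+β), (−1−α,1−β), (−1+α,−1+β), (1−α,−1−β) in the (ξ,η)-coordinates induced by r, s with r × s > 0, |α|+|β|<1), one has ∫_K ξ² dx = (4/3)(1+α²)(r × s), ∫_K ξη dx = (4/3)αβ (r × s), and ∫_K η² dx = (4/3)(1+β²)(r × s). -/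
open MeasureTheory

/-! The map `(a, b) ↦ a • r + b • s` has Jacobian `r × s`, pulls `ξ, η` back to the coordinate
projections, and carries the reference quadrilateral `quadK α β (1, 0) (0, 1)` onto `K`. The
reference quadrilateral is in turn the image of the square `[-1, 1]²` under the bilinear
interpolation `(u, v) ↦ (u + α u v, v + β u v)` of its vertices, which for `|α| + |β| < 1` is
injective with Jacobian `1 + β u + α v > 0`. The moments thus become integrals of polynomials over
the square. -/

open Set

lemma Convex.combo_mem_of_mem_Icc {E : Type*} [AddCommGroup E] [Module ℝ E] {s : Set E}
    (hs : Convex ℝ s) {x y : E} (hx : x ∈ s) (hy : y ∈ s) {t : ℝ} (ht : t ∈ Icc (-1 : ℝ) 1) :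
    ((1 + t) / 2) • x + ((1 - t) / 2) • y ∈ s :=
  hs hx hy (by linarith [ht.1]) (by linarith [ht.2]) (by ring)

lemma le_of_mem_convexHull {s : Set (ℝ × ℝ)} {a b c : ℝ} (h : ∀ x ∈ s, a * x.1 + b * x.2 ≤ c)
    {p : ℝ × ℝ} (hp : p ∈ convexHull ℝ s) : a * p.1 + b * p.2 ≤ c := by
  have hlin : IsLinearMap ℝ fun x : ℝ × ℝ => a * x.1 + b * x.2 :=
    ⟨fun x y => by simp only [Prod.fst_add, Prod.snd_add]; ring,
      fun k x => by simp only [Prod.smul_fst, Prod.smul_snd, smul_eq_mul]; ring⟩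
  exact convexHull_min h (convex_halfSpace_le hlin c) hp

lemma abs_mul_le_abs_of_mem_Icc (a : ℝ) {t : ℝ} (ht : t ∈ Icc (-1 : ℝ) 1) : |a * t| ≤ |a| := by
  rw [abs_mul]
  exact mul_le_of_le_one_right (abs_nonneg a) (abs_le.2 ht)

lemma ContinuousLinearMap.det_eq_cross2 (f : ℝ × ℝ →L[ℝ] ℝ × ℝ) :
    f.det = cross2 (f (1, 0)) (f (0, 1)) := by
  rw [ContinuousLinearMap.det, ← LinearMap.det_toMatrix (Module.Basis.finTwoProd ℝ),
    Matrix.det_fin_two]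
  simp [LinearMap.toMatrix_apply, cross2, mul_comm]

lemma setIntegral_Icc_prod_Icc {f : ℝ × ℝ → ℝ} (hf : Continuous f) {a b c d : ℝ}
    (hab : a ≤ b) (hcd : c ≤ d) :
    ∫ p in Icc a b ×ˢ Icc c d, f p = ∫ x in a..b, ∫ y in c..d, f (x, y) := by
  have hint : IntegrableOn f (Icc a b ×ˢ Icc c d) (volume.prod volume) := by
    rw [← Measure.volume_eq_prod]
    exact hf.continuousOn.integrableOn_compact (isCompact_Icc.prod isCompact_Icc)
  simp only [Measure.volume_eq_prod, setIntegral_prod f hint, intervalIntegral.integral_of_le hab,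
    intervalIntegral.integral_of_le hcd, integral_Icc_eq_integral_Ioc]

section Coordinates

variable {r s : ℝ × ℝ}

def fromCoords (r s : ℝ × ℝ) : ℝ × ℝ →L[ℝ] ℝ × ℝ :=
  (ContinuousLinearMap.fst ℝ ℝ ℝ).smulRight r + (ContinuousLinearMap.snd ℝ ℝ ℝ).smulRight s

@[simp]
lemma fromCoords_apply (r s p : ℝ × ℝ) : fromCoords r s p = p.1 • r + p.2 • s := rfl

lemma det_fromCoords (r s : ℝ × ℝ) : (fromCoords r s).det = cross2 r s := by
  simp [ContinuousLinearMap.det_eq_cross2]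

lemma xiCoord_fromCoords (hc : cross2 r s ≠ 0) (p : ℝ × ℝ) :
    xiCoord r s (fromCoords r s p) = p.1 := by
  rw [xiCoord, div_eq_iff hc]
  simp only [cross2, fromCoords_apply, Prod.fst_add, Prod.snd_add, Prod.smul_fst, Prod.smul_snd,
    smul_eq_mul]
  ring

lemma etaCoord_fromCoords (hc : cross2 r s ≠ 0) (p : ℝ × ℝ) :
    etaCoord r s (fromCoords r s p) = p.2 := by
  rw [etaCoord, div_eq_iff hc]
  simp only [cross2, fromCoords_apply, Prod.fst_add, Prod.snd_add, Prod.smul_fst, Prod.smul_snd,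
    smul_eq_mul]
  ring

lemma fromCoords_injective (hc : cross2 r s ≠ 0) : Function.Injective (fromCoords r s) :=
  fun p q h => Prod.ext
    (by simpa only [xiCoord_fromCoords hc] using congrArg (xiCoord r s) h)
    (by simpa only [etaCoord_fromCoords hc] using congrArg (etaCoord r s) h)

lemma setIntegral_image_fromCoords (hc : cross2 r s ≠ 0) {t : Set (ℝ × ℝ)}
    (ht : MeasurableSet t) (g : ℝ × ℝ → ℝ) :
    ∫ x in fromCoords r s '' t, g x = |cross2 r s| * ∫ p in t, g (fromCoords r s p) := by
  rw [integral_image_eq_integral_abs_det_fderiv_smul volume ht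
    (fun p _ => (fromCoords r s).hasFDerivAt.hasFDerivWithinAt) (fromCoords_injective hc).injOn,
    det_fromCoords, ← integral_const_mul]
  rfl

lemma quadK_eq_image_fromCoords (α β : ℝ) (r s : ℝ × ℝ) :
    quadK α β r s = fromCoords r s '' quadK α β (1, 0) (0, 1) := by
  rw [quadK, quadK,
    IsLinearMap.image_convexHull ⟨map_add (fromCoords r s), map_smul (fromCoords r s)⟩]
  simp [image_insert_eq]

end Coordinates

section ReferenceQuadrilateral

variable {α β : ℝ}

def quadParam (α β : ℝ) (p : ℝ × ℝ) : ℝ × ℝ :=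
  (p.1 + α * (p.1 * p.2), p.2 + β * (p.1 * p.2))

def quadParamDeriv (α β : ℝ) (p : ℝ × ℝ) : ℝ × ℝ →L[ℝ] ℝ × ℝ :=
  let d := p.1 • ContinuousLinearMap.snd ℝ ℝ ℝ + p.2 • ContinuousLinearMap.fst ℝ ℝ ℝ
  (ContinuousLinearMap.fst ℝ ℝ ℝ + α • d).prod (ContinuousLinearMap.snd ℝ ℝ ℝ + β • d)

lemma hasFDerivAt_quadParam (α β : ℝ) (p : ℝ × ℝ) :
    HasFDerivAt (quadParam α β) (quadParamDeriv α β p) p := by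
  have hfst : HasFDerivAt (fun q : ℝ × ℝ => q.1) (ContinuousLinearMap.fst ℝ ℝ ℝ) p :=
    hasFDerivAt_fst
  have hsnd : HasFDerivAt (fun q : ℝ × ℝ => q.2) (ContinuousLinearMap.snd ℝ ℝ ℝ) p :=
    hasFDerivAt_snd
  have hmul := hfst.mul hsnd
  exact (hfst.add (hmul.const_mul α)).prodMk (hsnd.add (hmul.const_mul β))

lemma det_quadParamDeriv (α β : ℝ) (p : ℝ × ℝ) :
    (quadParamDeriv α β p).det = 1 + β * p.1 + α * p.2 := by
  rw [ContinuousLinearMap.det_eq_cross2]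
  simp only [cross2, quadParamDeriv, smul_add, ContinuousLinearMap.prod_apply,
    add_apply, ContinuousLinearMap.coe_fst', smul_apply,
    ContinuousLinearMap.coe_snd', smul_eq_mul, mul_zero, mul_one, zero_add, add_zero]
  ring

lemma quadK_one_zero_zero_one (α β : ℝ) : quadK α β (1, 0) (0, 1) =
    convexHull ℝ {(1 + α, 1 + β), (-(1 + α), 1 - β), (-1 + α, -1 + β), (1 - α, -(1 + β))} := by
  simp [quadK]

lemma quadParam_mapsTo (α β : ℝ) :
    MapsTo (quadParam α β) (Icc (-1 : ℝ) 1 ×ˢ Icc (-1 : ℝ) 1) (quadK α β (1, 0) (0, 1)) := by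
  rintro ⟨u, v⟩ ⟨hu, hv⟩
  rw [quadK_one_zero_zero_one]
  have hK := convex_convexHull ℝ
    ({(1 + α, 1 + β), (-(1 + α), 1 - β), (-1 + α, -1 + β), (1 - α, -(1 + β))} : Set (ℝ × ℝ))
  have hvert : ∀ x ∈ ({(1 + α, 1 + β), (-(1 + α), 1 - β), (-1 + α, -1 + β), (1 - α, -(1 + β))} :
      Set (ℝ × ℝ)), x ∈ convexHull ℝ _ := fun x hx => subset_convexHull ℝ _ hx
  -- `quadParam` is the bilinear interpolation of the four vertices
  have hinterp : quadParam α β (u, v) =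
      ((1 + v) / 2) • (((1 + u) / 2) • (1 + α, 1 + β) + ((1 - u) / 2) • (-(1 + α), 1 - β)) +
      ((1 - v) / 2) • (((1 + u) / 2) • (1 - α, -(1 + β)) + ((1 - u) / 2) • (-1 + α, -1 + β)) := by
    ext <;> simp only [quadParam, Prod.smul_mk, smul_eq_mul, Prod.mk_add_mk] <;> ring
  rw [hinterp]
  exact hK.combo_mem_of_mem_Icc
    (hK.combo_mem_of_mem_Icc (hvert _ (by simp)) (hvert _ (by simp)) hu)
    (hK.combo_mem_of_mem_Icc (hvert _ (by simp)) (hvert _ (by simp)) hu) hv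

variable (hαβ : |α| + |β| < 1)
include hαβ

lemma injOn_quadParam : InjOn (quadParam α β) (Icc (-1 : ℝ) 1 ×ˢ Icc (-1 : ℝ) 1) := by
  rintro ⟨p₁, p₂⟩ ⟨hp₁, hp₂⟩ ⟨q₁, q₂⟩ ⟨hq₁, hq₂⟩ h
  obtain ⟨e₁, e₂⟩ := Prod.ext_iff.1 h
  simp only [quadParam] at e₁ e₂
  -- the two coordinate equations combine to `(p₁ p₂ - q₁ q₂) * (positive factor) = 0`
  have key : (p₁ * p₂ - q₁ * q₂) * ((1 + β * p₁) * (1 + α * p₂) - α * β * (q₁ * q₂)) = 0 := by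
    linear_combination q₂ * e₁ + (p₁ + α * (p₁ * p₂ - q₁ * q₂)) * e₂
  have hβp := abs_mul_le_abs_of_mem_Icc β hp₁
  have hαp := abs_mul_le_abs_of_mem_Icc α hp₂
  have hq : |q₁ * q₂| ≤ 1 := by
    rw [abs_mul]
    exact mul_le_one₀ (abs_le.2 hq₁) (abs_nonneg _) (abs_le.2 hq₂)
  have hpos : 0 < (1 + β * p₁) * (1 + α * p₂) - α * β * (q₁ * q₂) := by
    have hβ : 1 - |β| ≤ 1 + β * p₁ := by linarith [neg_abs_le (β * p₁)]
    have hα : 1 - |α| ≤ 1 + α * p₂ := by linarith [neg_abs_le (α * p₂)]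
    have hαβq : α * β * (q₁ * q₂) ≤ |α| * |β| :=
      calc α * β * (q₁ * q₂) ≤ |α| * |β| * |q₁ * q₂| := by
            rw [← abs_mul, ← abs_mul]; exact le_abs_self _
        _ ≤ |α| * |β| := mul_le_of_le_one_right (by positivity) hq
    nlinarith [mul_le_mul hβ hα (by linarith [abs_nonneg β]) (by linarith [abs_nonneg α])]
  have huv : p₁ * p₂ = q₁ * q₂ := sub_eq_zero.1 ((mul_eq_zero.1 key).resolve_right hpos.ne')
  rw [huv] at e₁ e₂
  exact Prod.ext (by linarith) (by linarith)

lemma mem_image_quadParam {x y : ℝ} (h₁ : -β * x + (1 + α) * y ≤ 1 + α)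
    (h₂ : (1 + β) * x + -α * y ≤ 1 + β) (h₃ : -β * x + -(1 - α) * y ≤ 1 - α)
    (h₄ : -(1 - β) * x + -α * y ≤ 1 - β) :
    (x, y) ∈ quadParam α β '' (Icc (-1 : ℝ) 1 ×ˢ Icc (-1 : ℝ) 1) := by
  have hαv : ∀ v ∈ Icc (-1 : ℝ) 1, |β| < 1 + α * v := fun v hv => by
    linarith [neg_abs_le (α * v), abs_mul_le_abs_of_mem_Icc α hv]
  -- for fixed `v`, `quadParam · v` is affine and meets the vertical line through `x` where
  -- `u = x / (1 + α v)`; choose `v` by the intermediate value theorem to hit the height `y`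
  let f : ℝ → ℝ := fun v => v * (1 + α * v) + β * x * v - y * (1 + α * v)
  obtain ⟨v, hv, hfv⟩ : ∃ v ∈ Icc (-1 : ℝ) 1, f v = 0 :=
    intermediate_value_Icc (by norm_num) (by fun_prop : Continuous f).continuousOn
      ⟨by simp only [f]; linarith, by simp only [f]; linarith⟩
  have hβv := hαv v hv
  have hden : 0 < 1 + α * v := by linarith [abs_nonneg β]
  set u := x / (1 + α * v)
  have hx : u + α * (u * v) = x := by simp only [u]; field_simp
  have hy : v + β * (u * v) = y := by
    have : (v + β * (u * v) - y) * (1 + α * v) = 0 := by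
      simp only [f] at hfv; linear_combination hfv + β * v * hx
    linarith [(mul_eq_zero.1 this).resolve_right hden.ne']
  rw [← hx, ← hy] at h₂ h₄
  have hu₁ : 0 ≤ (u + 1) * (1 - β + α * v) := by linarith
  have hu₂ : 0 ≤ (1 - u) * (1 + β + α * v) := by linarith
  rw [mul_nonneg_iff_of_pos_right (by linarith [le_abs_self β])] at hu₁
  rw [mul_nonneg_iff_of_pos_right (by linarith [neg_abs_le β])] at hu₂
  exact ⟨(u, v), ⟨⟨by linarith, by linarith⟩, hv⟩, Prod.ext hx hy⟩

lemma quadK_one_zero_zero_one_subset :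
    quadK α β (1, 0) (0, 1) ⊆ quadParam α β '' (Icc (-1 : ℝ) 1 ×ˢ Icc (-1 : ℝ) 1) := by
  rintro ⟨x, y⟩ hp
  rw [quadK_one_zero_zero_one] at hp
  refine mem_image_quadParam hαβ (le_of_mem_convexHull ?_ hp) (le_of_mem_convexHull ?_ hp)
    (le_of_mem_convexHull ?_ hp) (le_of_mem_convexHull ?_ hp) <;>
  · simp only [mem_insert_iff, mem_singleton_iff, forall_eq_or_imp, forall_eq]
    refine ⟨?_, ?_, ?_, ?_⟩ <;>
      nlinarith [le_abs_self α, le_abs_self β, neg_abs_le α, neg_abs_le β]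

lemma image_quadParam :
    quadParam α β '' (Icc (-1 : ℝ) 1 ×ˢ Icc (-1 : ℝ) 1) = quadK α β (1, 0) (0, 1) :=
  (quadParam_mapsTo α β).image_subset.antisymm (quadK_one_zero_zero_one_subset hαβ)

lemma setIntegral_quadK_one_zero_zero_one (g : ℝ × ℝ → ℝ) :
    ∫ x in quadK α β (1, 0) (0, 1), g x =
      ∫ p in Icc (-1 : ℝ) 1 ×ˢ Icc (-1 : ℝ) 1, (1 + β * p.1 + α * p.2) * g (quadParam α β p) := by
  have hsq : MeasurableSet (Icc (-1 : ℝ) 1 ×ˢ Icc (-1 : ℝ) 1) :=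
    measurableSet_Icc.prod measurableSet_Icc
  rw [← image_quadParam hαβ, integral_image_eq_integral_abs_det_fderiv_smul volume hsq
    (fun p _ => (hasFDerivAt_quadParam α β p).hasFDerivWithinAt) (injOn_quadParam hαβ)]
  refine setIntegral_congr_fun hsq fun p ⟨hu, hv⟩ => ?_
  have hβu := abs_mul_le_abs_of_mem_Icc β hu
  have hαv := abs_mul_le_abs_of_mem_Icc α hv
  have hjac : 0 < 1 + β * p.1 + α * p.2 := by
    linarith [neg_abs_le (β * p.1), neg_abs_le (α * p.2)]
  rw [det_quadParamDeriv, smul_eq_mul, abs_of_pos hjac]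

end ReferenceQuadrilateral

lemma moments_square (α β : ℝ) :
    (∫ p in Icc (-1 : ℝ) 1 ×ˢ Icc (-1 : ℝ) 1,
      (1 + β * p.1 + α * p.2) * (p.1 + α * (p.1 * p.2)) ^ 2) = 4 / 3 * (1 + α ^ 2) ∧
    (∫ p in Icc (-1 : ℝ) 1 ×ˢ Icc (-1 : ℝ) 1,
      (1 + β * p.1 + α * p.2) * ((p.1 + α * (p.1 * p.2)) * (p.2 + β * (p.1 * p.2)))) =
        4 / 3 * (α * β) ∧
    (∫ p in Icc (-1 : ℝ) 1 ×ˢ Icc (-1 : ℝ) 1,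
      (1 + β * p.1 + α * p.2) * (p.2 + β * (p.1 * p.2)) ^ 2) = 4 / 3 * (1 + β ^ 2) := by
  refine ⟨?_, ?_, ?_⟩ <;>
  · rw [setIntegral_Icc_prod_Icc (by fun_prop) (by norm_num) (by norm_num)]
    ring_nf
    -- `integral_const_mul` does not fire on `∫ x, c * x` unless `f := id` is given explicitly
    simp (disch := apply Continuous.intervalIntegrable; fun_prop) only
      [intervalIntegral.integral_add, intervalIntegral.integral_const_mul,
        intervalIntegral.integral_mul_const, intervalIntegral.integral_const_mul (f := fun x => x),
        integral_pow, intervalIntegral.integral_const, integral_id]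
    norm_num
    ring

lemma setIntegral_quadK {α β : ℝ} {r s : ℝ × ℝ} (hc : 0 < cross2 r s) (hαβ : |α| + |β| < 1)
    (g : ℝ → ℝ → ℝ) :
    ∫ x in quadK α β r s, g (xiCoord r s x) (etaCoord r s x) =
      cross2 r s * ∫ p in Icc (-1 : ℝ) 1 ×ˢ Icc (-1 : ℝ) 1,
        (1 + β * p.1 + α * p.2) * g (p.1 + α * (p.1 * p.2)) (p.2 + β * (p.1 * p.2)) := by
  have hK : MeasurableSet (quadK α β (1, 0) (0, 1)) :=
    (Set.Finite.isCompact_convexHull ℝ (toFinite _)).isClosed.measurableSet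
  rw [quadK_eq_image_fromCoords, setIntegral_image_fromCoords hc.ne' hK, abs_of_pos hc]
  simp only [xiCoord_fromCoords hc.ne', etaCoord_fromCoords hc.ne']
  rw [setIntegral_quadK_one_zero_zero_one hαβ fun p => g p.1 p.2]
  rfl

/-- `∫_K ξ² = (4/3)(1+α²)(r×s)`, `∫_K ξη = (4/3)αβ(r×s)`,
`∫_K η² = (4/3)(1+β²)(r×s)`. -/
theorem stmt_6 (α β : ℝ) (r s : ℝ × ℝ) (hc : 0 < cross2 r s) (hconv : |α| + |β| < 1) :
    (∫ x in quadK α β r s, (xiCoord r s x) ^ 2) = 4 / 3 * (1 + α ^ 2) * cross2 r s ∧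
    (∫ x in quadK α β r s, xiCoord r s x * etaCoord r s x) = 4 / 3 * (α * β) * cross2 r s ∧
    (∫ x in quadK α β r s, (etaCoord r s x) ^ 2) = 4 / 3 * (1 + β ^ 2) * cross2 r s := by
  obtain ⟨hξξ, hξη, hηη⟩ := moments_square α β
  refine ⟨(setIntegral_quadK hc hconv fun a _ => a ^ 2).trans ?_,
    (setIntegral_quadK hc hconv fun a b => a * b).trans ?_,
    (setIntegral_quadK hc hconv fun _ b => b ^ 2).trans ?_⟩
  · rw [hξξ]; ring
  · rw [hξη]; ring
  · rw [hηη]; ring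
end

section
/- Let ξ̂ = ξ − (1/|K|)∫_K ξ dx and η̂ = η − (1/|K|)∫_K η dx on the quadrilateral K of the standard setup. Then ∫_K ξ̂² dx = (4/9)(3 + 3α² − β²)(r × s), ∫_K ξ̂ η̂ dx = (8/9) αβ (r × s), and ∫_K η̂² dx = (4/9)(3 + 3β² − α²)(r × s). -/
/-!
The map `t ↦ t.1 • r + t.2 • s` inverts `(ξ, η)`, has Jacobian `r × s`, and carries the
quadrilateral `K₀ = refQuad α β` of the `(ξ, η)`-plane onto `K`. The diagonals of `K₀` cross at
`(-β, -α)`, so the diagonal `A₁A₃` cuts `K₀` into two triangles. The edge-midpoint rule integrates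
quadratic polynomials exactly over a triangle; this gives `∫_{K₀}` of every polynomial of degree
`≤ 2`, and the means of `ξ`, `η` and the centred second moments are integrals of this kind.
-/

open MeasureTheory

open Set

theorem AffineMap.setIntegral_image {E F : Type*} [NormedAddCommGroup E] [NormedSpace ℝ E]
    [FiniteDimensional ℝ E] [MeasurableSpace E] [BorelSpace E] (μ : Measure E)
    [μ.IsAddHaarMeasure] [NormedAddCommGroup F] [NormedSpace ℝ F] (f : E →ᵃ[ℝ] E)
    (hf : LinearMap.det f.linear ≠ 0) {s : Set E} (hs : MeasurableSet s) (g : E → F) :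
    ∫ x in f '' s, g x ∂μ = |LinearMap.det f.linear| • ∫ x in s, g (f x) ∂μ := by
  have hderiv : ∀ x ∈ s, HasFDerivWithinAt f (LinearMap.toContinuousLinearMap f.linear) s x := by
    intro x _
    rw [f.decomp]
    exact ((LinearMap.toContinuousLinearMap f.linear).hasFDerivAt.add_const (f 0)).hasFDerivWithinAt
  have hinj : InjOn f s :=
    (f.linear_injective_iff.1 (f.linear.equivOfDetNeZero hf).injective).injOn
  rw [integral_image_eq_integral_abs_det_fderiv_smul μ hs hderiv hinj g, integral_smul]
  rfl

def stdTriangle : Set (ℝ × ℝ) := {t | 0 ≤ t.1 ∧ 0 ≤ t.2 ∧ t.1 + t.2 ≤ 1}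

theorem convex_stdTriangle : Convex ℝ stdTriangle := by
  rintro x ⟨hx₁, hx₂, hx⟩ y ⟨hy₁, hy₂, hy⟩ a b ha hb hab
  refine ⟨?_, ?_, ?_⟩ <;>
    simp only [Prod.fst_add, Prod.snd_add, Prod.smul_fst, Prod.smul_snd, smul_eq_mul] <;> nlinarith

theorem convexHull_stdTriangle :
    convexHull ℝ {0, ((1 : ℝ), (0 : ℝ)), ((0 : ℝ), (1 : ℝ))} = stdTriangle := by
  refine (convexHull_min ?_ convex_stdTriangle).antisymm ?_
  · intro t ht
    simp only [mem_insert_iff, mem_singleton_iff] at ht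
    rcases ht with rfl | rfl | rfl <;> norm_num [stdTriangle]
  · rintro ⟨x, y⟩ ⟨hx, hy, hxy⟩
    have h := (convex_convexHull ℝ {0, ((1 : ℝ), (0 : ℝ)), ((0 : ℝ), (1 : ℝ))}).sum_mem
      (t := Finset.univ) (w := ![1 - x - y, x, y]) (z := ![0, (1, 0), (0, 1)])
      (by
        intro i _
        fin_cases i <;> simp only [Fin.isValue, Fin.zero_eta, Fin.mk_one, Fin.reduceFinMk,
          Matrix.cons_val_zero, Matrix.cons_val_one, Matrix.cons_val] <;> linarith)
      (by simp only [Fin.sum_univ_three, Fin.isValue, Matrix.cons_val_zero, Matrix.cons_val_one,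
        Matrix.cons_val]; ring)
      (by intro i _; fin_cases i <;> exact subset_convexHull ℝ _ (by simp))
    simpa [Fin.sum_univ_three] using h

theorem isCompact_stdTriangle : IsCompact stdTriangle := by
  rw [← convexHull_stdTriangle]
  exact (toFinite _).isCompact_convexHull (𝕜 := ℝ)

section Frames

variable {E : Type*} [AddCommGroup E] [Module ℝ E]

def frameMap (u v : E) : ℝ × ℝ →ₗ[ℝ] E :=
  (LinearMap.fst ℝ ℝ ℝ).smulRight u + (LinearMap.snd ℝ ℝ ℝ).smulRight v

@[simp]
theorem frameMap_apply (u v : E) (t : ℝ × ℝ) :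
    frameMap u v t = t.1 • u + t.2 • v := rfl

def triangleMap (p q r : E) : ℝ × ℝ →ᵃ[ℝ] E :=
  (frameMap (q - p) (r - p)).toAffineMap + AffineMap.const ℝ (ℝ × ℝ) p

@[simp]
theorem triangleMap_apply (p q r : E) (t : ℝ × ℝ) :
    triangleMap p q r t = t.1 • (q - p) + t.2 • (r - p) + p := rfl

@[simp]
theorem triangleMap_linear (p q r : E) :
    (triangleMap p q r).linear = frameMap (q - p) (r - p) := by
  ext <;> simp [triangleMap]

theorem convexHull_triangle_eq_image (p q r : E) :
    convexHull ℝ {p, q, r} = triangleMap p q r '' stdTriangle := by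
  rw [← convexHull_stdTriangle, AffineMap.image_convexHull]
  simp [Set.image_insert_eq]

theorem mem_segment_or_mem_segment {b d o x : E}
    (ho : o ∈ segment ℝ b d) (hx : x ∈ segment ℝ b d) :
    x ∈ segment ℝ b o ∨ x ∈ segment ℝ o d := by
  simp only [mem_segment_iff_wbtw] at *
  obtain ⟨μ, hμ, rfl⟩ := ho
  rcases hx with ⟨t, ht, rfl⟩
  rw [AffineMap.lineMap_apply, AffineMap.lineMap_apply]
  rcases wbtw_or_wbtw_smul_vadd_of_nonneg b (d -ᵥ b) ht.1 hμ.1 with h | h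
  · exact Or.inl h
  · refine Or.inr (Wbtw.trans_left_right ?_ h)
    rw [← AffineMap.lineMap_apply]
    exact ⟨t, ht, rfl⟩

theorem convexHull_quadrilateral_eq_union {a b c d o : E}
    (hac : o ∈ segment ℝ a c) (hbd : o ∈ segment ℝ b d) :
    convexHull ℝ {a, b, c, d} = convexHull ℝ {a, b, c} ∪ convexHull ℝ {a, c, d} := by
  refine (Set.union_subset (convexHull_mono ?_) (convexHull_mono ?_)).antisymm' ?_
  · intro; simp only [mem_insert_iff, mem_singleton_iff]; tauto
  · intro; simp only [mem_insert_iff, mem_singleton_iff]; tauto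
  have hset : ({a, b, c, d} : Set E) = {b, d, a, c} := by
    ext; simp only [mem_insert_iff, mem_singleton_iff]; tauto
  rw [hset, ← convexJoin_segments]
  intro z hz
  obtain ⟨x, hx, y, hy, hz⟩ := mem_convexJoin.1 hz
  have hac₁ : segment ℝ a c ⊆ convexHull ℝ {a, b, c} :=
    segment_subset_convexHull (by simp) (by simp)
  have hac₂ : segment ℝ a c ⊆ convexHull ℝ {a, c, d} :=
    segment_subset_convexHull (by simp) (by simp)
  rcases mem_segment_or_mem_segment hbd hx with hx | hx
  · refine Or.inl ((convex_convexHull ℝ _).segment_subset ?_ (hac₁ hy) hz)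
    exact (convex_convexHull ℝ _).segment_subset (subset_convexHull ℝ _ (by simp)) (hac₁ hac) hx
  · refine Or.inr ((convex_convexHull ℝ _).segment_subset ?_ (hac₂ hy) hz)
    exact (convex_convexHull ℝ _).segment_subset (hac₂ hac) (subset_convexHull ℝ _ (by simp)) hx

end Frames

theorem det_frameMap (u v : ℝ × ℝ) : LinearMap.det (frameMap u v) = cross2 u v := by
  rw [← LinearMap.det_toMatrix (Module.Basis.finTwoProd ℝ), Matrix.det_fin_two]
  simp only [LinearMap.toMatrix_apply, Module.Basis.finTwoProd_zero, Module.Basis.finTwoProd_one,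
    Module.Basis.coe_finTwoProd_repr, frameMap_apply, one_smul, zero_smul, add_zero, zero_add,
    Matrix.cons_val_zero, Matrix.cons_val_one, Matrix.cons_val_fin_one, cross2]
  ring

theorem setIntegral_stdTriangle {F : Type*} [NormedAddCommGroup F] [NormedSpace ℝ F]
    {f : ℝ × ℝ → F} (hf : Continuous f) :
    ∫ t in stdTriangle, f t = ∫ x in (0 : ℝ)..1, ∫ y in (0 : ℝ)..1 - x, f (x, y) := by
  have hT : MeasurableSet stdTriangle := isCompact_stdTriangle.isClosed.measurableSet
  have hslice : ∀ x : ℝ, ∫ y, stdTriangle.indicator f (x, y) =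
      (Icc 0 1).indicator (fun x => ∫ y in (0 : ℝ)..1 - x, f (x, y)) x := by
    intro x
    by_cases hx : x ∈ Icc (0 : ℝ) 1
    · rw [indicator_of_mem hx, intervalIntegral.integral_of_le (by linarith [hx.2]),
        ← integral_Icc_eq_integral_Ioc, ← integral_indicator measurableSet_Icc]
      congr 1 with y
      simp only [indicator, stdTriangle, mem_ofPred_eq, mem_Icc]
      congr 1
      apply propext
      constructor
      · rintro ⟨-, h₂, h₃⟩
        exact ⟨h₂, by linarith⟩
      · rintro ⟨h₂, h₃⟩
        exact ⟨hx.1, h₂, by linarith⟩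
    · rw [indicator_of_notMem hx]
      refine integral_eq_zero_of_ae (Filter.Eventually.of_forall fun y => indicator_of_notMem ?_ _)
      rintro ⟨h₁, h₂, h₃⟩
      exact hx ⟨h₁, by simp only at h₂ h₃; linarith⟩
  rw [← integral_indicator hT, Measure.volume_eq_prod, integral_prod _ ?_]
  · simp_rw [hslice]
    rw [integral_indicator measurableSet_Icc, integral_Icc_eq_integral_Ioc,
      ← intervalIntegral.integral_of_le zero_le_one]
  · rw [← Measure.volume_eq_prod, integrable_indicator_iff hT]
    exact hf.continuousOn.integrableOn_compact isCompact_stdTriangle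

theorem integral_cubic (d₀ d₁ d₂ d₃ a b : ℝ) :
    ∫ x in a..b, (d₀ + d₁ * x + d₂ * x ^ 2 + d₃ * x ^ 3) =
      (d₀ * b + d₁ * b ^ 2 / 2 + d₂ * b ^ 3 / 3 + d₃ * b ^ 4 / 4) -
        (d₀ * a + d₁ * a ^ 2 / 2 + d₂ * a ^ 3 / 3 + d₃ * a ^ 4 / 4) := by
  refine intervalIntegral.integral_eq_sub_of_hasDerivAt
    (f := fun x => d₀ * x + d₁ * x ^ 2 / 2 + d₂ * x ^ 3 / 3 + d₃ * x ^ 4 / 4) (fun x _ => ?_)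
    (Continuous.intervalIntegrable (by fun_prop) a b)
  have h : HasDerivAt (fun x => d₀ * x + d₁ * x ^ 2 / 2 + d₂ * x ^ 3 / 3 + d₃ * x ^ 4 / 4)
      (d₀ * 1 + d₁ * (2 * x ^ 1) / 2 + d₂ * (3 * x ^ 2) / 3 + d₃ * (4 * x ^ 3) / 4) x :=
    ((((hasDerivAt_id x).const_mul d₀).add (((hasDerivAt_pow 2 x).const_mul d₁).div_const 2)).add
      (((hasDerivAt_pow 3 x).const_mul d₂).div_const 3)).add
      (((hasDerivAt_pow 4 x).const_mul d₃).div_const 4)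
  exact h.congr_deriv (by ring)

def quadPoly (a₀₀ a₁₀ a₀₁ a₂₀ a₁₁ a₀₂ : ℝ) (t : ℝ × ℝ) : ℝ :=
  a₀₀ + a₁₀ * t.1 + a₀₁ * t.2 + a₂₀ * t.1 ^ 2 + a₁₁ * t.1 * t.2 + a₀₂ * t.2 ^ 2

theorem continuous_quadPoly (a₀₀ a₁₀ a₀₁ a₂₀ a₁₁ a₀₂ : ℝ) :
    Continuous (quadPoly a₀₀ a₁₀ a₀₁ a₂₀ a₁₁ a₀₂) := by
  unfold quadPoly; fun_prop

theorem integral_quadPoly_stdTriangle (a₀₀ a₁₀ a₀₁ a₂₀ a₁₁ a₀₂ : ℝ) :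
    ∫ t in stdTriangle, quadPoly a₀₀ a₁₀ a₀₁ a₂₀ a₁₁ a₀₂ t =
      a₀₀ / 2 + a₁₀ / 6 + a₀₁ / 6 + a₂₀ / 12 + a₁₁ / 24 + a₀₂ / 12 := by
  have hinner : ∀ x : ℝ, ∫ y in (0 : ℝ)..1 - x, quadPoly a₀₀ a₁₀ a₀₁ a₂₀ a₁₁ a₀₂ (x, y) =
      (a₀₀ + a₀₁ / 2 + a₀₂ / 3) + (a₁₀ - a₀₀ + a₁₁ / 2 - a₀₁ - a₀₂) * x +
        (a₂₀ - a₁₀ + a₀₁ / 2 - a₁₁ + a₀₂) * x ^ 2 + (a₁₁ / 2 - a₂₀ - a₀₂ / 3) * x ^ 3 := by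
    intro x
    have h := integral_cubic (a₀₀ + a₁₀ * x + a₂₀ * x ^ 2) (a₀₁ + a₁₁ * x) a₀₂ 0 0 (1 - x)
    simp only [quadPoly]
    convert h using 1
    · congr 1 with y; ring
    · ring
  rw [setIntegral_stdTriangle (continuous_quadPoly _ _ _ _ _ _)]
  simp_rw [hinner]
  rw [integral_cubic]
  ring

theorem integral_quadPoly_convexHull_triangle (p q r : ℝ × ℝ) (h : cross2 (q - p) (r - p) ≠ 0)
    (a₀₀ a₁₀ a₀₁ a₂₀ a₁₁ a₀₂ : ℝ) :
    ∫ x in convexHull ℝ {p, q, r}, quadPoly a₀₀ a₁₀ a₀₁ a₂₀ a₁₁ a₀₂ x =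
      |cross2 (q - p) (r - p)| / 6 * (quadPoly a₀₀ a₁₀ a₀₁ a₂₀ a₁₁ a₀₂ (midpoint ℝ p q) +
        quadPoly a₀₀ a₁₀ a₀₁ a₂₀ a₁₁ a₀₂ (midpoint ℝ q r) +
        quadPoly a₀₀ a₁₀ a₀₁ a₂₀ a₁₁ a₀₂ (midpoint ℝ r p)) := by
  set u := q - p
  set v := r - p
  have hpull : ∀ t, quadPoly a₀₀ a₁₀ a₀₁ a₂₀ a₁₁ a₀₂ (triangleMap p q r t) =
      quadPoly (quadPoly a₀₀ a₁₀ a₀₁ a₂₀ a₁₁ a₀₂ p)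
        (a₁₀ * u.1 + a₀₁ * u.2 + 2 * a₂₀ * p.1 * u.1 + a₁₁ * (p.1 * u.2 + p.2 * u.1) +
          2 * a₀₂ * p.2 * u.2)
        (a₁₀ * v.1 + a₀₁ * v.2 + 2 * a₂₀ * p.1 * v.1 + a₁₁ * (p.1 * v.2 + p.2 * v.1) +
          2 * a₀₂ * p.2 * v.2)
        (a₂₀ * u.1 ^ 2 + a₁₁ * u.1 * u.2 + a₀₂ * u.2 ^ 2)
        (2 * a₂₀ * u.1 * v.1 + a₁₁ * (u.1 * v.2 + u.2 * v.1) + 2 * a₀₂ * u.2 * v.2)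
        (a₂₀ * v.1 ^ 2 + a₁₁ * v.1 * v.2 + a₀₂ * v.2 ^ 2) t := by
    intro t
    simp only [quadPoly, triangleMap_apply, Prod.fst_add, Prod.snd_add, Prod.smul_fst,
      Prod.smul_snd, smul_eq_mul]
    ring
  have hdet : LinearMap.det (triangleMap p q r).linear = cross2 u v := by
    rw [triangleMap_linear, det_frameMap]
  rw [convexHull_triangle_eq_image, AffineMap.setIntegral_image volume _ (hdet ▸ h)
    isCompact_stdTriangle.isClosed.measurableSet, hdet, smul_eq_mul]
  simp_rw [hpull]
  rw [integral_quadPoly_stdTriangle]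
  generalize |cross2 u v| = D
  simp only [quadPoly, midpoint_eq_smul_add, invOf_eq_inv, Prod.fst_add, Prod.snd_add,
    Prod.smul_fst, Prod.smul_snd, smul_eq_mul, u, v, Prod.fst_sub, Prod.snd_sub]
  ring

theorem volume_setOf_snd_sub_fst_eq (c : ℝ) : volume {z : ℝ × ℝ | z.2 - z.1 = c} = 0 := by
  have hm : MeasurableSet {z : ℝ × ℝ | z.2 - z.1 = c} :=
    measurableSet_eq_fun (by fun_prop) measurable_const
  rw [Measure.volume_eq_prod, Measure.measure_prod_null hm]
  refine Filter.Eventually.of_forall fun x => ?_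
  have : Prod.mk x ⁻¹' {z : ℝ × ℝ | z.2 - z.1 = c} = {c + x} := by
    ext y
    simp only [mem_preimage, mem_ofPred_eq, mem_singleton_iff]
    constructor <;> intro h <;> linarith
  simp [this]

def refQuad (α β : ℝ) : Set (ℝ × ℝ) :=
  convexHull ℝ {(1 + α, 1 + β), (-(1 + α), 1 - β), (-1 + α, -1 + β), (1 - α, -(1 + β))}

section Quadrilateral

variable {α β : ℝ}

theorem refQuad_eq_union (hαβ : |α| + |β| < 1) :
    refQuad α β = convexHull ℝ {(1 + α, 1 + β), (-(1 + α), 1 - β), (-1 + α, -1 + β)} ∪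
      convexHull ℝ {(1 + α, 1 + β), (-1 + α, -1 + β), (1 - α, -(1 + β))} := by
  have hsum := abs_lt.1 ((abs_add_le α β).trans_lt hαβ)
  have hdiff := abs_lt.1 ((abs_sub α β).trans_lt hαβ)
  refine convexHull_quadrilateral_eq_union (o := (-β, -α))
    ⟨(1 - α - β) / 2, (1 + α + β) / 2, by linarith, by linarith, by ring, ?_⟩
    ⟨(1 - α + β) / 2, (1 + α - β) / 2, by linarith, by linarith, by ring, ?_⟩ <;>
  ext <;> simp only [neg_add_rev, Prod.smul_mk, smul_eq_mul, Prod.mk_add_mk] <;> ring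

theorem aedisjoint_refQuad_triangles (hαβ : |α| + |β| < 1) :
    AEDisjoint volume (convexHull ℝ {(1 + α, 1 + β), (-(1 + α), 1 - β), (-1 + α, -1 + β)})
      (convexHull ℝ {(1 + α, 1 + β), (-1 + α, -1 + β), (1 - α, -(1 + β))}) := by
  have hdiff := abs_lt.1 ((abs_sub α β).trans_lt hαβ)
  have hlin : IsLinearMap ℝ fun z : ℝ × ℝ => z.2 - z.1 :=
    (LinearMap.snd ℝ ℝ ℝ - LinearMap.fst ℝ ℝ ℝ).isLinear
  have h₁ : convexHull ℝ {(1 + α, 1 + β), (-(1 + α), 1 - β), (-1 + α, -1 + β)} ⊆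
      {z : ℝ × ℝ | β - α ≤ z.2 - z.1} := by
    refine convexHull_min ?_ (convex_halfSpace_ge hlin _)
    intro z hz
    simp only [mem_insert_iff, mem_singleton_iff] at hz
    rcases hz with rfl | rfl | rfl <;> simp only [mem_ofPred_eq] <;> linarith
  have h₂ : convexHull ℝ {(1 + α, 1 + β), (-1 + α, -1 + β), (1 - α, -(1 + β))} ⊆
      {z : ℝ × ℝ | z.2 - z.1 ≤ β - α} := by
    refine convexHull_min ?_ (convex_halfSpace_le hlin _)
    intro z hz
    simp only [mem_insert_iff, mem_singleton_iff] at hz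
    rcases hz with rfl | rfl | rfl <;> simp only [mem_ofPred_eq] <;> linarith
  refine measure_mono_null (fun z hz => ?_) (volume_setOf_snd_sub_fst_eq (β - α))
  exact le_antisymm (h₂ hz.2) (h₁ hz.1)

theorem integral_quadPoly_refQuad (hαβ : |α| + |β| < 1) (a₀₀ a₁₀ a₀₁ a₂₀ a₁₁ a₀₂ : ℝ) :
    ∫ t in refQuad α β, quadPoly a₀₀ a₁₀ a₀₁ a₂₀ a₁₁ a₀₂ t =
      4 * a₀₀ + 4 * β / 3 * a₁₀ + 4 * α / 3 * a₀₁ + 4 * (1 + α ^ 2) / 3 * a₂₀ +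
        4 * (α * β) / 3 * a₁₁ + 4 * (1 + β ^ 2) / 3 * a₀₂ := by
  have hdiff := abs_lt.1 ((abs_sub α β).trans_lt hαβ)
  have hcompact : ∀ p q r : ℝ × ℝ, IsCompact (convexHull ℝ {p, q, r}) :=
    fun p q r => (toFinite _).isCompact_convexHull (𝕜 := ℝ)
  have hint (p q r : ℝ × ℝ) :
      IntegrableOn (quadPoly a₀₀ a₁₀ a₀₁ a₂₀ a₁₁ a₀₂) (convexHull ℝ {p, q, r}) :=
    (continuous_quadPoly _ _ _ _ _ _).continuousOn.integrableOn_compact (hcompact p q r)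
  have hdet₁ : cross2 ((-(1 + α), 1 - β) - (1 + α, 1 + β)) ((-1 + α, -1 + β) - (1 + α, 1 + β)) =
      4 * (1 + α - β) := by
    simp only [cross2, Prod.mk_sub_mk]; ring
  have hdet₂ : cross2 ((-1 + α, -1 + β) - (1 + α, 1 + β)) ((1 - α, -(1 + β)) - (1 + α, 1 + β)) =
      4 * (1 - α + β) := by
    simp only [cross2, Prod.mk_sub_mk]; ring
  rw [refQuad_eq_union hαβ, setIntegral_union₀ (aedisjoint_refQuad_triangles hαβ)
    (hcompact _ _ _).isClosed.measurableSet.nullMeasurableSet (hint _ _ _) (hint _ _ _),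
    integral_quadPoly_convexHull_triangle _ _ _ (by rw [hdet₁]; linarith),
    integral_quadPoly_convexHull_triangle _ _ _ (by rw [hdet₂]; linarith), hdet₁, hdet₂,
    abs_of_pos (by linarith), abs_of_pos (by linarith)]
  simp only [quadPoly, midpoint_eq_smul_add, invOf_eq_inv, Prod.mk_add_mk, Prod.smul_mk,
    smul_eq_mul]
  ring

variable {r s : ℝ × ℝ}

theorem quadK_eq_image_refQuad : quadK α β r s = frameMap r s '' refQuad α β := by
  rw [refQuad, LinearMap.image_convexHull]
  simp [quadK, image_insert_eq]

theorem xiCoord_frameMap (hrs : cross2 r s ≠ 0) (t : ℝ × ℝ) :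
    xiCoord r s (frameMap r s t) = t.1 := by
  rw [xiCoord, div_eq_iff hrs]
  simp only [cross2, frameMap_apply, Prod.fst_add, Prod.snd_add, Prod.smul_fst, Prod.smul_snd,
    smul_eq_mul]
  ring

theorem etaCoord_frameMap (hrs : cross2 r s ≠ 0) (t : ℝ × ℝ) :
    etaCoord r s (frameMap r s t) = t.2 := by
  rw [etaCoord, div_eq_iff hrs]
  simp only [cross2, frameMap_apply, Prod.fst_add, Prod.snd_add, Prod.smul_fst, Prod.smul_snd,
    smul_eq_mul]
  ring

theorem integral_quadPoly_quadK (hrs : 0 < cross2 r s) (hαβ : |α| + |β| < 1)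
    (a₀₀ a₁₀ a₀₁ a₂₀ a₁₁ a₀₂ : ℝ) :
    ∫ x in quadK α β r s, quadPoly a₀₀ a₁₀ a₀₁ a₂₀ a₁₁ a₀₂ (xiCoord r s x, etaCoord r s x) =
      cross2 r s * (4 * a₀₀ + 4 * β / 3 * a₁₀ + 4 * α / 3 * a₀₁ + 4 * (1 + α ^ 2) / 3 * a₂₀ +
        4 * (α * β) / 3 * a₁₁ + 4 * (1 + β ^ 2) / 3 * a₀₂) := by
  have hdet : LinearMap.det (frameMap r s).toAffineMap.linear = cross2 r s := det_frameMap r s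
  have hm : MeasurableSet (refQuad α β) :=
    ((toFinite _).isCompact_convexHull (𝕜 := ℝ)).isClosed.measurableSet
  rw [quadK_eq_image_refQuad, ← LinearMap.coe_toAffineMap,
    AffineMap.setIntegral_image volume _ (hdet ▸ hrs.ne') hm, hdet, abs_of_pos hrs, smul_eq_mul]
  simp only [LinearMap.coe_toAffineMap, xiCoord_frameMap hrs.ne', etaCoord_frameMap hrs.ne']
  rw [integral_quadPoly_refQuad hαβ]

theorem volume_real_quadK (hrs : 0 < cross2 r s) (hαβ : |α| + |β| < 1) :
    volume.real (quadK α β r s) = 4 * cross2 r s := by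
  simpa [quadPoly, mul_comm] using integral_quadPoly_quadK hrs hαβ 1 0 0 0 0 0

theorem integral_xiCoord_quadK (hrs : 0 < cross2 r s) (hαβ : |α| + |β| < 1) :
    ∫ x in quadK α β r s, xiCoord r s x = 4 * β / 3 * cross2 r s := by
  simpa [quadPoly, mul_comm] using integral_quadPoly_quadK hrs hαβ 0 1 0 0 0 0

theorem integral_etaCoord_quadK (hrs : 0 < cross2 r s) (hαβ : |α| + |β| < 1) :
    ∫ x in quadK α β r s, etaCoord r s x = 4 * α / 3 * cross2 r s := by
  simpa [quadPoly, mul_comm] using integral_quadPoly_quadK hrs hαβ 0 0 1 0 0 0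

end Quadrilateral

/-- The mean-zero modifications `ξ̂ = ξ - (1/|K|)∫_K ξ`,
`η̂ = η - (1/|K|)∫_K η` satisfy
`∫_K ξ̂² = (4/9)(3+3α²-β²)(r×s)`, `∫_K ξ̂η̂ = (8/9)αβ(r×s)`,
`∫_K η̂² = (4/9)(3+3β²-α²)(r×s)`. -/
theorem stmt_7 (α β : ℝ) (r s : ℝ × ℝ) (hc : 0 < cross2 r s) (hconv : |α| + |β| < 1)
    (hatXi hatEta : ℝ × ℝ → ℝ)
    (hXi : ∀ x, hatXi x = xiCoord r s x -
      (∫ y in quadK α β r s, xiCoord r s y) / (volume (quadK α β r s)).toReal)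
    (hEta : ∀ x, hatEta x = etaCoord r s x -
      (∫ y in quadK α β r s, etaCoord r s y) / (volume (quadK α β r s)).toReal) :
    (∫ x in quadK α β r s, (hatXi x) ^ 2) = 4 / 9 * (3 + 3 * α ^ 2 - β ^ 2) * cross2 r s ∧
    (∫ x in quadK α β r s, hatXi x * hatEta x) = 8 / 9 * (α * β) * cross2 r s ∧
    (∫ x in quadK α β r s, (hatEta x) ^ 2) = 4 / 9 * (3 + 3 * β ^ 2 - α ^ 2) * cross2 r s := by
  have hvol : (volume (quadK α β r s)).toReal = 4 * cross2 r s := volume_real_quadK hc hconv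
  have hξ (x : ℝ × ℝ) : hatXi x = xiCoord r s x - β / 3 := by
    rw [hXi, integral_xiCoord_quadK hc hconv, hvol]
    field_simp
  have hη (x : ℝ × ℝ) : hatEta x = etaCoord r s x - α / 3 := by
    rw [hEta, integral_etaCoord_quadK hc hconv, hvol]
    field_simp
  have hξξ : (fun x => hatXi x ^ 2) =
      fun x => quadPoly (β ^ 2 / 9) (-(2 * β) / 3) 0 1 0 0 (xiCoord r s x, etaCoord r s x) := by
    ext x; rw [hξ]; simp only [quadPoly]; ring
  have hξη : (fun x => hatXi x * hatEta x) =
      fun x => quadPoly (α * β / 9) (-α / 3) (-β / 3) 0 1 0 (xiCoord r s x, etaCoord r s x) := by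
    ext x; rw [hξ, hη]; simp only [quadPoly]; ring
  have hηη : (fun x => hatEta x ^ 2) =
      fun x => quadPoly (α ^ 2 / 9) 0 (-(2 * α) / 3) 0 0 1 (xiCoord r s x, etaCoord r s x) := by
    ext x; rw [hη]; simp only [quadPoly]; ring
  rw [hξξ, hξη, hηη, integral_quadPoly_quadK hc hconv, integral_quadPoly_quadK hc hconv,
    integral_quadPoly_quadK hc hconv]
  exact ⟨by ring, by ring, by ring⟩
end

section
/- The sequence ℝ → span{1, ξ, η, ξη} →(∇) span{∇ξ, ∇η, ξ∇η, η∇ξ} →(rot) ℝ is exact: the kernel of ∇ is the constants, the image of ∇ equals the kernel of rot, and rot is surjective onto ℝ. -/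
/-- Exactness of the local sequence
`ℝ → span{1, ξ, η, ξη} →(∇) span{∇ξ, ∇η, ξ∇η, η∇ξ} →(rot) ℝ`,
expressed in the coordinates of these two 4-dimensional spaces: a function
`a + bξ + cη + dξη` has coefficient vector `(a,b,c,d)`, its gradient has
coefficient vector `(b,c,d,d)` in the basis `(∇ξ, ∇η, ξ∇η, η∇ξ)` (the map
`grad`), and the rotation of `d1∇ξ + d2∇η + d3ξ∇η + d4η∇ξ` is the constant
`(d3-d4)/(r×s)` (the map `rotm`).  The kernel of `grad` is the constants
(the span of `(1,0,0,0)`), the image of `grad` is the kernel of `rotm`, and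
`rotm` is surjective. -/
theorem stmt_11 (r s : ℝ × ℝ) (hc : cross2 r s ≠ 0)
    (grad : (Fin 4 → ℝ) →ₗ[ℝ] (Fin 4 → ℝ)) (rotm : (Fin 4 → ℝ) →ₗ[ℝ] ℝ)
    (hgrad : ∀ p : Fin 4 → ℝ, grad p = ![p 1, p 2, p 3, p 3])
    (hrot : ∀ d : Fin 4 → ℝ, rotm d = (d 2 - d 3) / cross2 r s) :
    LinearMap.ker grad = Submodule.span ℝ {(![1, 0, 0, 0] : Fin 4 → ℝ)} ∧
    LinearMap.range grad = LinearMap.ker rotm ∧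
    Function.Surjective rotm := by
  refine ⟨?_, ?_, ?_⟩
  · ext p
    simp only [LinearMap.mem_ker, hgrad, Submodule.mem_span_singleton]
    constructor
    · intro h
      refine ⟨p 0, ?_⟩
      have h1 : p 1 = 0 := congrFun h 0
      have h2 : p 2 = 0 := congrFun h 1
      have h3 : p 3 = 0 := congrFun h 2
      funext i
      fin_cases i <;> simp [h1, h2, h3]
    · rintro ⟨a, rfl⟩
      funext i
      fin_cases i <;> simp
  · ext q
    simp only [LinearMap.mem_range, LinearMap.mem_ker, hgrad, hrot]
    constructor
    · rintro ⟨p, rfl⟩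
      simp [div_eq_zero_iff]
    · intro h
      have h23 : q 2 = q 3 := by
        rcases div_eq_zero_iff.mp h with h' | h'
        · linarith
        · exact absurd h' hc
      refine ⟨![0, q 0, q 1, q 2], ?_⟩
      funext i
      fin_cases i <;> simp [h23]
  · intro y
    refine ⟨![0, 0, y * cross2 r s, 0], ?_⟩
    rw [hrot]
    simp
    field_simp
end
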